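/- The size-merged pointer arithmetic table subsumes the size-specific tables: for every array size S ≥ 1, every starting abstract location l ∈ {Head, Tail, Off} present for that size, and every integer offset n, the set of abstract outcomes given by the size-specific table D(S) at (l, n) is a subset of the set given by the unknown-size table at (l, n), where the unknown-size table maps: (n ≤ −2): Head ↦ {E⁻}, Tail ↦ {E⁻, Head, Tail}, Off ↦ {E⁻, Head, Tail}; (n = −1): Head ↦ {E⁻}, Tail ↦ {Head, Tail}, Off ↦ {Head, Tail}; (n = 0): Head ↦ {Head}, Tail ↦ {Tail}, Off ↦ {Off}; (n = 1): Head ↦ {Tail, Off}, Tail ↦ {Tail, Off}, Off ↦ {E⁺}; (n ≥ 2): Head ↦ {Tail, Off, E⁺}, Tail ↦ {Tail, Off, E⁺}, Off ↦ {E⁺}. -/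
import Mathlib


inductive AbsOut where
  | Em | Head | Tail | Off | Ep
deriving DecidableEq

/-- The starting abstract locations of an array. -/
inductive ALoc where
  | head | tail | off
deriving DecidableEq

/-- Size-specific table, `Head` column (valid for every size `S ≥ 1`). -/
def headTab (S n : ℤ) : Set AbsOut :=
  if n < 0 then {.Em}
  else if n = 0 then {.Head}
  else if n < S then {.Tail}
  else if n = S then {.Off}
  else {.Ep}

/-- Size-specific table, `Off` column (valid for every size `S ≥ 1`). -/
def offTab (S n : ℤ) : Set AbsOut :=
  if n ≤ -S - 1 then {.Em}
  else if n = -S then {.Head}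
  else if n ≤ -1 then {.Tail}
  else if n = 0 then {.Off}
  else {.Ep}

/-- Size-specific table, `Tail` column for sizes `S ≥ 3`. -/
def tailTab (S n : ℤ) : Set AbsOut :=
  if n ≤ -S then {.Em}
  else if n = 1 - S then {.Em, .Head}
  else if n ≤ -2 then {.Em, .Head, .Tail}
  else if n = -1 then {.Head, .Tail}
  else if n = 0 then {.Tail}
  else if n = 1 then {.Tail, .Off}
  else if n ≤ S - 2 then {.Tail, .Off, .Ep}
  else if n = S - 1 then {.Off, .Ep}
  else {.Ep}

/-- Size-specific table, `Tail` column for size `S = 2`. -/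
def tailTab2 (n : ℤ) : Set AbsOut :=
  if n ≤ -2 then {.Em}
  else if n = -1 then {.Head}
  else if n = 0 then {.Tail}
  else if n = 1 then {.Off}
  else {.Ep}

/-- The size-specific pointer arithmetic table `D(S)`. -/
def D (S : ℤ) (l : ALoc) (n : ℤ) : Set AbsOut :=
  match l with
  | .head => headTab S n
  | .off => offTab S n
  | .tail => if S = 2 then tailTab2 n else tailTab S n

/-- The merged (unknown-size) pointer arithmetic table. -/
def U (l : ALoc) (n : ℤ) : Set AbsOut :=
  match l with
  | .head =>
      if n ≤ -1 then {.Em}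
      else if n = 0 then {.Head}
      else if n = 1 then {.Tail, .Off}
      else {.Tail, .Off, .Ep}
  | .tail =>
      if n ≤ -2 then {.Em, .Head, .Tail}
      else if n = -1 then {.Head, .Tail}
      else if n = 0 then {.Tail}
      else if n = 1 then {.Tail, .Off}
      else {.Tail, .Off, .Ep}
  | .off =>
      if n ≤ -2 then {.Em, .Head, .Tail}
      else if n = -1 then {.Head, .Tail}
      else if n = 0 then {.Off}
      else {.Ep}

/-- The size-merged pointer arithmetic table subsumes the size-specific tables:
for every size `S ≥ 1`, every starting abstract location present for that size
(the `Tail` location is absent for `S = 1`), and every offset `n`, the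
size-specific outcomes are a subset of the merged ones. -/
theorem merged_table_subsumes :
    ∀ S : ℤ, 1 ≤ S → ∀ (l : ALoc) (n : ℤ),
      (l = ALoc.tail → 2 ≤ S) → D S l n ⊆ U l n := by
  intro S hS l n ht
  cases l <;>
    simp only [D, U, headTab, offTab, tailTab, tailTab2] <;>
    [skip; (have h2 := ht rfl); skip] <;>
    split_ifs <;>
    first
      | omega
      | (intro x hx;
         simp only [Set.mem_insert_iff, Set.mem_singleton_iff] at hx ⊢; tauto)
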